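/- arXiv:2012.05349 — 4 statements merged into one kernel-verified Lean document; each statement's English description precedes it below -/
import Mathlib

section
/- Let E_R ∈ ℝ^{n_x×n_x} and E_W ∈ ℝ^{n_p×n_p} be symmetric positive definite, and define the ellipsoidal level sets R(α) = {x ∈ ℝ^{n_x} : xᵀ E_R x ≤ α²} and W(σ) = {w ∈ ℝ^{n_p} : wᵀ E_W w ≤ σ²}. Suppose a_α ≥ 0 and a_σ ≥ 0 satisfy a_α + a_σ ≤ 1 and the 2×2 block matrix [[Aᵀ E_R A − a_α E_R, Aᵀ E_R B^w],[(B^w)ᵀ E_R A, (B^w)ᵀ E_R B^w − a_σ E_W]] is negative semidefinite. Then for all α_k ≥ 0, σ_k ≥ 0, and α_{k+1} ≥ 0 with α_{k+1}² ≥ a_α α_k² + a_σ σ_k², the containment A·R(α_k) + B^w·W(σ_k) ⊆ R(α_{k+1}) holds; in particular, for every σ ≥ 0, A·R(σ) + B^w·W(σ) ⊆ R(σ). -/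
/-!
Testing the negative semidefinite block matrix against `(x, w)` gives the dissipation inequality
`(A x + Bʷ w)ᵀ E_R (A x + Bʷ w) ≤ a_α xᵀ E_R x + a_σ wᵀ E_W w`. Hence every point of
`A·R(α_k) + Bʷ·W(σ_k)` has `E_R`-level at most `a_α α_k² + a_σ σ_k² ≤ α_{k+1}²`. The second claim is
the case `α_k = σ_k = α_{k+1} = σ`, where `a_α + a_σ ≤ 1` supplies the level inequality.
-/

open Matrix Set Pointwise Filter Topology

noncomputable def vnorm {n : Type*} [Fintype n] (v : n → ℝ) : ℝ :=
  Real.sqrt (∑ i, v i ^ 2)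

noncomputable def sNorm {m n : Type*} [Fintype m] [Fintype n] (M : Matrix m n ℝ) : ℝ :=
  sSup ((fun v => vnorm (M.mulVec v)) '' {v | vnorm v ≤ 1})

/-- `specLe1 M` means the spectral (operator 2-)norm of `M` is at most 1. -/
def specLe1 {m n : Type*} [Fintype m] [Fintype n] (M : Matrix m n ℝ) : Prop :=
  ∀ v, vnorm (M.mulVec v) ≤ vnorm v

/-- Membership in the structured norm-bounded uncertainty set 𝔻:
`Δ = diag(Δ₁,…,Δ_s)` with `‖Δᵢ‖₂ ≤ 1`. -/
def memD {s : ℕ} {np nq : Fin s → ℕ}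
    (Δ : Matrix (Σ i, Fin (np i)) (Σ i, Fin (nq i)) ℝ) : Prop :=
  ∃ B : ∀ i, Matrix (Fin (np i)) (Fin (nq i)) ℝ,
    (∀ i, specLe1 (B i)) ∧ Δ = Matrix.blockDiagonal' B

/-- The `i`-th row block of a block-partitioned matrix. -/
def rowBlock {s : ℕ} {nq : Fin s → ℕ} {n : Type*}
    (M : Matrix (Σ i, Fin (nq i)) n ℝ) (i : Fin s) : Matrix (Fin (nq i)) n ℝ :=
  Matrix.of fun j l => M ⟨i, j⟩ l

/-- The `i`-th block of a block-partitioned vector. -/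
def vecBlock {s : ℕ} {np : Fin s → ℕ} (v : (Σ i, Fin (np i)) → ℝ) (i : Fin s) :
    Fin (np i) → ℝ := fun j => v ⟨i, j⟩

namespace Matrix

variable {l m n : Type*} [Fintype l] [Fintype m] [Fintype n]

theorem dotProduct_transpose_mul_mul_mulVec {R : Type*} [CommSemiring R] (A : Matrix l m R)
    (M : Matrix l l R) (B : Matrix l n R) (x : m → R) (y : n → R) :
    x ⬝ᵥ (Aᵀ * M * B) *ᵥ y = A *ᵥ x ⬝ᵥ M *ᵥ (B *ᵥ y) := by
  rw [← mulVec_mulVec, ← mulVec_mulVec, dotProduct_mulVec, vecMul_transpose]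

theorem sumElim_dotProduct_fromBlocks_mulVec_sumElim {R : Type*} [CommSemiring R]
    (P : Matrix m m R) (Q : Matrix m n R) (S : Matrix n m R) (T : Matrix n n R)
    (x : m → R) (w : n → R) :
    Sum.elim x w ⬝ᵥ fromBlocks P Q S T *ᵥ Sum.elim x w =
      x ⬝ᵥ P *ᵥ x + x ⬝ᵥ Q *ᵥ w + (w ⬝ᵥ S *ᵥ x + w ⬝ᵥ T *ᵥ w) := by
  rw [fromBlocks_mulVec, sumElim_dotProduct_sumElim, Sum.elim_comp_inl, Sum.elim_comp_inr,
    dotProduct_add, dotProduct_add]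

theorem PosSemidef.dotProduct_mulVec_add_le {A : Matrix l m ℝ} {B : Matrix l n ℝ}
    {E : Matrix l l ℝ} {G : Matrix m m ℝ} {F : Matrix n n ℝ} {a b : ℝ}
    (h : (-(fromBlocks (Aᵀ * E * A - a • G) (Aᵀ * E * B)
        (Bᵀ * E * A) (Bᵀ * E * B - b • F))).PosSemidef) (x : m → ℝ) (w : n → ℝ) :
    (A *ᵥ x + B *ᵥ w) ⬝ᵥ E *ᵥ (A *ᵥ x + B *ᵥ w) ≤ a * (x ⬝ᵥ G *ᵥ x) + b * (w ⬝ᵥ F *ᵥ w) := by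
  have hxw := h.dotProduct_mulVec_nonneg (Sum.elim x w)
  simp only [star_trivial, neg_mulVec, dotProduct_neg, Left.nonneg_neg_iff,
    sumElim_dotProduct_fromBlocks_mulVec_sumElim, sub_mulVec, smul_mulVec, dotProduct_sub,
    dotProduct_smul, smul_eq_mul, dotProduct_transpose_mul_mul_mulVec] at hxw
  simp only [mulVec_add, dotProduct_add, add_dotProduct]
  linarith

theorem image_mulVec_add_image_mulVec_subset {A : Matrix l m ℝ} {B : Matrix l n ℝ}
    {E : Matrix l l ℝ} {G : Matrix m m ℝ} {F : Matrix n n ℝ} {a b : ℝ} (ha : 0 ≤ a) (hb : 0 ≤ b)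
    (hdiss : ∀ x w, (A *ᵥ x + B *ᵥ w) ⬝ᵥ E *ᵥ (A *ᵥ x + B *ᵥ w) ≤
      a * (x ⬝ᵥ G *ᵥ x) + b * (w ⬝ᵥ F *ᵥ w))
    {r s t : ℝ} (hrst : a * r + b * s ≤ t) :
    A.mulVec '' {x | x ⬝ᵥ G *ᵥ x ≤ r} + B.mulVec '' {w | w ⬝ᵥ F *ᵥ w ≤ s} ⊆
      {y | y ⬝ᵥ E *ᵥ y ≤ t} := by
  rintro _ ⟨_, ⟨x, hx, rfl⟩, _, ⟨w, hw, rfl⟩, rfl⟩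
  calc (A *ᵥ x + B *ᵥ w) ⬝ᵥ E *ᵥ (A *ᵥ x + B *ᵥ w)
      ≤ a * (x ⬝ᵥ G *ᵥ x) + b * (w ⬝ᵥ F *ᵥ w) := hdiss x w
    _ ≤ a * r + b * s := by gcongr <;> assumption
    _ ≤ t := hrst

end Matrix

theorem stmt3_general {nx np : ℕ}
    (A : Matrix (Fin nx) (Fin nx) ℝ) (Bw : Matrix (Fin nx) (Fin np) ℝ)
    (E_R : Matrix (Fin nx) (Fin nx) ℝ)
    (E_W : Matrix (Fin np) (Fin np) ℝ)
    (aα aσ : ℝ) (haα : 0 ≤ aα) (haσ : 0 ≤ aσ) (hsum : aα + aσ ≤ 1)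
    (hLMI : (-(Matrix.fromBlocks (Aᵀ * E_R * A - aα • E_R) (Aᵀ * E_R * Bw)
        (Bwᵀ * E_R * A) (Bwᵀ * E_R * Bw - aσ • E_W))).PosSemidef) :
    (∀ αk σk αk1 : ℝ, 0 ≤ αk → 0 ≤ σk → 0 ≤ αk1 →
      aα * αk ^ 2 + aσ * σk ^ 2 ≤ αk1 ^ 2 →
      A.mulVec '' {x | x ⬝ᵥ E_R.mulVec x ≤ αk ^ 2} +
          Bw.mulVec '' {w | w ⬝ᵥ E_W.mulVec w ≤ σk ^ 2} ⊆
        {x | x ⬝ᵥ E_R.mulVec x ≤ αk1 ^ 2}) ∧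
    (∀ σ : ℝ, 0 ≤ σ →
      A.mulVec '' {x | x ⬝ᵥ E_R.mulVec x ≤ σ ^ 2} +
          Bw.mulVec '' {w | w ⬝ᵥ E_W.mulVec w ≤ σ ^ 2} ⊆
        {x | x ⬝ᵥ E_R.mulVec x ≤ σ ^ 2}) := by
  have invariant {r s t : ℝ} (hrst : aα * r + aσ * s ≤ t) :=
    image_mulVec_add_image_mulVec_subset haα haσ hLMI.dotProduct_mulVec_add_le hrst
  refine ⟨fun αk σk αk1 _ _ _ hle => invariant hle, fun σ _ => invariant ?_⟩
  linarith [mul_le_mul_of_nonneg_right hsum (sq_nonneg σ)]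

/-- the ellipsoidal level-set dynamics condition. -/
theorem stmt3 {nx np : ℕ}
    (A : Matrix (Fin nx) (Fin nx) ℝ) (Bw : Matrix (Fin nx) (Fin np) ℝ)
    (E_R : Matrix (Fin nx) (Fin nx) ℝ) (hER : E_R.PosDef)
    (E_W : Matrix (Fin np) (Fin np) ℝ) (hEW : E_W.PosDef)
    (aα aσ : ℝ) (haα : 0 ≤ aα) (haσ : 0 ≤ aσ) (hsum : aα + aσ ≤ 1)
    (hLMI : (-(Matrix.fromBlocks (Aᵀ * E_R * A - aα • E_R) (Aᵀ * E_R * Bw)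
        (Bwᵀ * E_R * A) (Bwᵀ * E_R * Bw - aσ • E_W))).PosSemidef) :
    (∀ αk σk αk1 : ℝ, 0 ≤ αk → 0 ≤ σk → 0 ≤ αk1 →
      aα * αk ^ 2 + aσ * σk ^ 2 ≤ αk1 ^ 2 →
      A.mulVec '' {x | x ⬝ᵥ E_R.mulVec x ≤ αk ^ 2} +
          Bw.mulVec '' {w | w ⬝ᵥ E_W.mulVec w ≤ σk ^ 2} ⊆
        {x | x ⬝ᵥ E_R.mulVec x ≤ αk1 ^ 2}) ∧
    (∀ σ : ℝ, 0 ≤ σ →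
      A.mulVec '' {x | x ⬝ᵥ E_R.mulVec x ≤ σ ^ 2} +
          Bw.mulVec '' {w | w ⬝ᵥ E_W.mulVec w ≤ σ ^ 2} ⊆
        {x | x ⬝ᵥ E_R.mulVec x ≤ σ ^ 2}) :=
  stmt3_general A Bw E_R E_W aα aσ haα haσ hsum hLMI
end

section
/- Let E_R ∈ ℝ^{n_x×n_x} be symmetric positive definite and, for i = 1,…,s, let E_{W,i} ∈ ℝ^{n_pi×n_pi} be symmetric positive definite, with n_p = Σ_i n_pi. Write w ∈ ℝ^{n_p} in blocks w = (w_1,…,w_s) with w_i ∈ ℝ^{n_pi}, and define R(α) = {x ∈ ℝ^{n_x} : xᵀ E_R x ≤ α²} and, for σ ∈ ℝ^s with σ ≥ 0 componentwise, W(σ) = {w ∈ ℝ^{n_p} : w_iᵀ E_{W,i} w_i ≤ σ_i² for all i}. Suppose a_α ≥ 0 and a_{σ,1},…,a_{σ,s} ≥ 0 satisfy a_α + Σ_{i=1}^s a_{σ,i} ≤ 1 and the 2×2 block matrix [[Aᵀ E_R A − a_α E_R, Aᵀ E_R B^w],[(B^w)ᵀ E_R A, (B^w)ᵀ E_R B^w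 − D]] is negative semidefinite, where D = diag(a_{σ,1} E_{W,1},…,a_{σ,s} E_{W,s}). Then for all α_k ≥ 0, σ_k ∈ ℝ^s with σ_k ≥ 0, and α_{k+1} ≥ 0 with α_{k+1}² ≥ a_α α_k² + Σ_{i=1}^s a_{σ,i} (σ_k)_i², the containment A·R(α_k) + B^w·W(σ_k) ⊆ R(α_{k+1}) holds. -/
open Matrix Set Pointwise Filter Topology

/-! The LMI is a dissipation inequality: evaluating its quadratic form at `(x, w)` gives
`(A x + Bʷ w)ᵀ E_R (A x + Bʷ w) ≤ a_α xᵀ E_R x + wᵀ D w`, and the block-diagonal term splits into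
`∑ a_{σ,i} w_iᵀ E_{W,i} w_i`. On `R(α_k) × W(σ_k)` the right side is at most
`a_α α_k² + ∑ a_{σ,i} σ_i² ≤ α_{k+1}²`. -/

lemma dotProduct_fromBlocks_mulVec_sumElim {R m n : Type*} [Fintype m] [Fintype n]
    [CommRing R] (P : Matrix m m R) (Q : Matrix m n R) (S : Matrix n m R) (T : Matrix n n R)
    (x : m → R) (w : n → R) :
    Sum.elim x w ⬝ᵥ fromBlocks P Q S T *ᵥ Sum.elim x w =
      x ⬝ᵥ P *ᵥ x + x ⬝ᵥ Q *ᵥ w + (w ⬝ᵥ S *ᵥ x + w ⬝ᵥ T *ᵥ w) := by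
  rw [fromBlocks_mulVec, sumElim_dotProduct_sumElim, dotProduct_add, dotProduct_add,
    Sum.elim_comp_inl, Sum.elim_comp_inr]

lemma dotProduct_mulVec_add_le_of_posSemidef_neg_fromBlocks {R m n : Type*}
    [Fintype m] [Fintype n] [CommRing R] [PartialOrder R] [IsOrderedRing R] [StarRing R]
    [TrivialStar R] (A E P : Matrix m m R) (B : Matrix m n R) (D : Matrix n n R)
    (h : (-fromBlocks (Aᵀ * E * A - P) (Aᵀ * E * B) (Bᵀ * E * A) (Bᵀ * E * B - D)).PosSemidef)
    (x : m → R) (w : n → R) :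
    (A *ᵥ x + B *ᵥ w) ⬝ᵥ E *ᵥ (A *ᵥ x + B *ᵥ w) ≤ x ⬝ᵥ P *ᵥ x + w ⬝ᵥ D *ᵥ w := by
  have h₀ := h.dotProduct_mulVec_nonneg (Sum.elim x w)
  simp only [star_trivial, neg_mulVec, dotProduct_neg, dotProduct_fromBlocks_mulVec_sumElim,
    sub_mulVec, dotProduct_sub, ← mulVec_mulVec, dotProduct_mulVec _ Aᵀ, dotProduct_mulVec _ Bᵀ,
    vecMul_transpose] at h₀
  simp only [mulVec_add, dotProduct_add, add_dotProduct]
  linear_combination h₀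

lemma dotProduct_blockDiagonal'_mulVec {s : ℕ} {np : Fin s → ℕ}
    (M : ∀ i, Matrix (Fin (np i)) (Fin (np i)) ℝ) (w : (Σ i, Fin (np i)) → ℝ) :
    w ⬝ᵥ blockDiagonal' M *ᵥ w = ∑ i, vecBlock w i ⬝ᵥ M i *ᵥ vecBlock w i := by
  simp only [dotProduct, mulVec, vecBlock]
  rw [← Finset.univ_sigma_univ, Finset.sum_sigma]
  refine Finset.sum_congr rfl fun i _ => Finset.sum_congr rfl fun j _ => ?_
  rw [Finset.sum_sigma, Finset.sum_eq_single i]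
  · simp only [blockDiagonal'_apply_eq]
  · intro i' _ hne
    exact Finset.sum_eq_zero fun j' _ => by rw [blockDiagonal'_apply_ne _ _ _ hne.symm, zero_mul]
  · simp

theorem stmt4_general {nx s : ℕ} {np : Fin s → ℕ}
    (A : Matrix (Fin nx) (Fin nx) ℝ) (Bw : Matrix (Fin nx) (Σ i, Fin (np i)) ℝ)
    (E_R : Matrix (Fin nx) (Fin nx) ℝ)
    (E_W : ∀ i, Matrix (Fin (np i)) (Fin (np i)) ℝ)
    (aα : ℝ) (aσ : Fin s → ℝ) (haα : 0 ≤ aα) (haσ : ∀ i, 0 ≤ aσ i)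
    (hLMI : (-(Matrix.fromBlocks (Aᵀ * E_R * A - aα • E_R) (Aᵀ * E_R * Bw)
        (Bwᵀ * E_R * A)
        (Bwᵀ * E_R * Bw - Matrix.blockDiagonal' fun i => aσ i • E_W i))).PosSemidef) :
    ∀ (αk : ℝ) (σk : Fin s → ℝ) (αk1 : ℝ), 0 ≤ αk → (∀ i, 0 ≤ σk i) → 0 ≤ αk1 →
      aα * αk ^ 2 + ∑ i, aσ i * σk i ^ 2 ≤ αk1 ^ 2 →
      A.mulVec '' {x | x ⬝ᵥ E_R.mulVec x ≤ αk ^ 2} +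
          Bw.mulVec ''
            {w | ∀ i, vecBlock w i ⬝ᵥ (E_W i).mulVec (vecBlock w i) ≤ σk i ^ 2} ⊆
        {x | x ⬝ᵥ E_R.mulVec x ≤ αk1 ^ 2} := by
  rintro αk σk αk1 - - - hbound _ ⟨_, ⟨x, hx, rfl⟩, _, ⟨w, hw, rfl⟩, rfl⟩
  have hdiss := dotProduct_mulVec_add_le_of_posSemidef_neg_fromBlocks _ _ _ _ _ hLMI x w
  have hstate : x ⬝ᵥ (aα • E_R) *ᵥ x ≤ aα * αk ^ 2 := by
    rw [smul_mulVec, dotProduct_smul, smul_eq_mul]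
    exact mul_le_mul_of_nonneg_left hx haα
  have hdist : w ⬝ᵥ blockDiagonal' (fun i => aσ i • E_W i) *ᵥ w ≤ ∑ i, aσ i * σk i ^ 2 := by
    rw [dotProduct_blockDiagonal'_mulVec]
    refine Finset.sum_le_sum fun i _ => ?_
    rw [smul_mulVec, dotProduct_smul, smul_eq_mul]
    exact mul_le_mul_of_nonneg_left (hw i) (haσ i)
  exact hdiss.trans (by linarith)

/-- structured version of the ellipsoidal level-set dynamics condition,
with blockwise disturbance ellipsoids. -/
theorem stmt4 {nx s : ℕ} {np : Fin s → ℕ}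
    (A : Matrix (Fin nx) (Fin nx) ℝ) (Bw : Matrix (Fin nx) (Σ i, Fin (np i)) ℝ)
    (E_R : Matrix (Fin nx) (Fin nx) ℝ) (hER : E_R.PosDef)
    (E_W : ∀ i, Matrix (Fin (np i)) (Fin (np i)) ℝ) (hEW : ∀ i, (E_W i).PosDef)
    (aα : ℝ) (aσ : Fin s → ℝ) (haα : 0 ≤ aα) (haσ : ∀ i, 0 ≤ aσ i)
    (hsum : aα + ∑ i, aσ i ≤ 1)
    (hLMI : (-(Matrix.fromBlocks (Aᵀ * E_R * A - aα • E_R) (Aᵀ * E_R * Bw)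
        (Bwᵀ * E_R * A)
        (Bwᵀ * E_R * Bw - Matrix.blockDiagonal' fun i => aσ i • E_W i))).PosSemidef) :
    ∀ (αk : ℝ) (σk : Fin s → ℝ) (αk1 : ℝ), 0 ≤ αk → (∀ i, 0 ≤ σk i) → 0 ≤ αk1 →
      aα * αk ^ 2 + ∑ i, aσ i * σk i ^ 2 ≤ αk1 ^ 2 →
      A.mulVec '' {x | x ⬝ᵥ E_R.mulVec x ≤ αk ^ 2} +
          Bw.mulVec ''
            {w | ∀ i, vecBlock w i ⬝ᵥ (E_W i).mulVec (vecBlock w i) ≤ σk i ^ 2} ⊆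
        {x | x ⬝ᵥ E_R.mulVec x ≤ αk1 ^ 2} :=
  stmt4_general A Bw E_R E_W aα aσ haα haσ hLMI
end

section
/- Let K ∈ ℝ^{n_u×n_x} and set Ā = A − B^u K. Let E_R ∈ ℝ^{n_x×n_x} be symmetric positive definite, and for i = 1,…,s let E_{W,i} ∈ ℝ^{n_pi×n_pi} be symmetric positive definite and let C̄_i ∈ ℝ^{n_qi×n_x} (in the application C̄_i = E^x_{Y,i} − E^u_{Y,i} K). Define R(σ) = {x : xᵀ E_R x ≤ σ²}, Y(σ) = {x : xᵀ C̄_iᵀ C̄_i x ≤ σ² for all i}, and W(σ) = {w = (w_1,…,w_s) ∈ ℝ^{n_p} : w_iᵀ E_{W,i} w_i ≤ σ² for all i}. Suppose a_α ≥ 0 and a_{σ,1},…,a_{σ,s} ≥ 0 satisfy: (a) the block matrix [[−E_R, E_R Ā, E_R B^w],[Āᵀ E_R, −a_α E_R, 0],[(B^w)ᵀ E_R, 0, −D]] ⪯ 0 where D = diag(a_{σ,1} E_{W,1},…,a_{σ,s} E_{W,s}); (b) a_α + Σ_{i=1}^s a_{σ,i} ≤ 1; and (c) C̄_iᵀ C̄_i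 ⪯ E_R for all i. Then for every σ ≥ 0: (i) R(σ) ⊆ Y(σ), and (ii) Ā·R(σ) + B^w·W(σ) ⊆ R(σ); i.e., R(σ) is a robust positive invariant level set for the closed-loop system x_{k+1} = Ā x_k + B^w w_k with w_k ∈ W(σ). -/
open Matrix Set Pointwise Filter Topology

/-! With `y = Ā x + Bʷ w`, the first block row of the LMI matrix annihilates `(y, x, w)`, so its
quadratic form there reduces to `yᵀ E_R y - a_α xᵀ E_R x - wᵀ D w`. Hence
`yᵀ E_R y ≤ a_α xᵀ E_R x + Σᵢ a_σ,ᵢ wᵢᵀ E_W,ᵢ wᵢ ≤ (a_α + Σᵢ a_σ,ᵢ) σ² ≤ σ²`.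
The inclusion `R(σ) ⊆ Y(σ)` is the comparison `C̄ᵢᵀ C̄ᵢ ⪯ E_R` of quadratic forms. -/

theorem Matrix.blockDiagonal'_mulVec_apply {ι α : Type*} [Fintype ι] [DecidableEq ι]
    [NonUnitalNonAssocSemiring α] {m n : ι → Type*} [∀ i, Fintype (n i)]
    (D : ∀ i, Matrix (m i) (n i) α) (w : (Σ i, n i) → α) (i : ι) (j : m i) :
    (blockDiagonal' D *ᵥ w) ⟨i, j⟩ = (D i *ᵥ fun k => w ⟨i, k⟩) j := by
  simp only [mulVec, dotProduct, ← Finset.univ_sigma_univ, Finset.sum_sigma]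
  rw [Finset.sum_eq_single_of_mem i (Finset.mem_univ i)]
  · simp [blockDiagonal'_apply]
  · intro k _ hk
    simp [blockDiagonal'_apply, Ne.symm hk]

theorem Matrix.dotProduct_blockDiagonal'_mulVec {ι α : Type*} [Fintype ι] [DecidableEq ι]
    [NonUnitalNonAssocSemiring α] {m n : ι → Type*} [∀ i, Fintype (m i)] [∀ i, Fintype (n i)]
    (D : ∀ i, Matrix (m i) (n i) α) (v : (Σ i, m i) → α) (w : (Σ i, n i) → α) :
    v ⬝ᵥ blockDiagonal' D *ᵥ w = ∑ i, (fun j => v ⟨i, j⟩) ⬝ᵥ D i *ᵥ (fun k => w ⟨i, k⟩) := by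
  simp only [dotProduct, ← Finset.univ_sigma_univ, Finset.sum_sigma, blockDiagonal'_mulVec_apply]

theorem Matrix.PosSemidef.dotProduct_mulVec_le_of_sub {n : Type*} [Fintype n]
    {E C : Matrix n n ℝ} (h : (E - C).PosSemidef) (x : n → ℝ) :
    x ⬝ᵥ C *ᵥ x ≤ x ⬝ᵥ E *ᵥ x := by
  have := h.dotProduct_mulVec_nonneg x
  simp only [star_trivial, sub_mulVec, dotProduct_sub] at this
  linarith

theorem lyapunov_step_le_of_lmi {n m : Type*} [Fintype n] [Fintype m]
    (E Ab : Matrix n n ℝ) (B : Matrix n m ℝ) (D : Matrix m m ℝ) (a : ℝ)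
    (h : (-(fromBlocks (fromBlocks (-E) (E * Ab) (Abᵀ * E) (-(a • E)))
        (fromRows (E * B) 0) (fromCols (Bᵀ * E) 0) (-D))).PosSemidef)
    (x : n → ℝ) (w : m → ℝ) :
    (Ab *ᵥ x + B *ᵥ w) ⬝ᵥ E *ᵥ (Ab *ᵥ x + B *ᵥ w) ≤ a * (x ⬝ᵥ E *ᵥ x) + w ⬝ᵥ D *ᵥ w := by
  set y := Ab *ᵥ x + B *ᵥ w
  have hMv : fromBlocks (fromBlocks (-E) (E * Ab) (Abᵀ * E) (-(a • E)))
        (fromRows (E * B) 0) (fromCols (Bᵀ * E) 0) (-D) *ᵥ Sum.elim (Sum.elim y x) w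
      = Sum.elim (Sum.elim (0 : n → ℝ) (Abᵀ *ᵥ (E *ᵥ y) - a • E *ᵥ x))
          (Bᵀ *ᵥ (E *ᵥ y) - D *ᵥ w) := by
    simp only [fromBlocks_mulVec, Sum.elim_comp_inl, Sum.elim_comp_inr, fromRows_mulVec,
      fromCols_mulVec_sumElim, zero_mulVec, neg_mulVec, smul_mulVec, ← mulVec_mulVec,
      ← Sum.elim_add_add, Sum.elim_eq_iff, add_zero, sub_eq_add_neg, and_true]
    rw [add_assoc, ← mulVec_add, neg_add_cancel]
  have key := h.dotProduct_mulVec_nonneg (Sum.elim (Sum.elim y x) w)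
  rw [neg_mulVec, hMv] at key
  simp only [star_trivial, dotProduct_neg, sumElim_dotProduct_sumElim, dotProduct_zero, zero_add,
    dotProduct_sub, dotProduct_smul, smul_eq_mul, dotProduct_mulVec _ Abᵀ, dotProduct_mulVec _ Bᵀ,
    vecMul_transpose] at key
  have hy : y ⬝ᵥ E *ᵥ y = Ab *ᵥ x ⬝ᵥ E *ᵥ y + B *ᵥ w ⬝ᵥ E *ᵥ y := add_dotProduct _ _ _
  linarith

theorem stmt7_general {nx nu s : ℕ} {np nq : Fin s → ℕ}
    (A : Matrix (Fin nx) (Fin nx) ℝ) (Bu : Matrix (Fin nx) (Fin nu) ℝ)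
    (Bw : Matrix (Fin nx) (Σ i, Fin (np i)) ℝ)
    (K : Matrix (Fin nu) (Fin nx) ℝ)
    (E_R : Matrix (Fin nx) (Fin nx) ℝ)
    (E_W : ∀ i, Matrix (Fin (np i)) (Fin (np i)) ℝ)
    (Cb : ∀ i : Fin s, Matrix (Fin (nq i)) (Fin nx) ℝ)
    (aα : ℝ) (aσ : Fin s → ℝ) (haα : 0 ≤ aα) (haσ : ∀ i, 0 ≤ aσ i)
    (ha : (-(Matrix.fromBlocks
        (Matrix.fromBlocks (-E_R) (E_R * (A - Bu * K)) ((A - Bu * K)ᵀ * E_R) (-(aα • E_R)))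
        (Matrix.fromRows (E_R * Bw) 0)
        (Matrix.fromCols (Bwᵀ * E_R) 0)
        (-(Matrix.blockDiagonal' fun i => aσ i • E_W i)))).PosSemidef)
    (hb : aα + ∑ i, aσ i ≤ 1)
    (hc : ∀ i, (E_R - (Cb i)ᵀ * Cb i).PosSemidef) :
    ∀ σ : ℝ, 0 ≤ σ →
      ({x | x ⬝ᵥ E_R.mulVec x ≤ σ ^ 2} ⊆
          {x | ∀ i, x ⬝ᵥ ((Cb i)ᵀ * Cb i).mulVec x ≤ σ ^ 2}) ∧
      ((A - Bu * K).mulVec '' {x | x ⬝ᵥ E_R.mulVec x ≤ σ ^ 2} +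
          Bw.mulVec ''
            {w | ∀ i, vecBlock w i ⬝ᵥ (E_W i).mulVec (vecBlock w i) ≤ σ ^ 2} ⊆
        {x | x ⬝ᵥ E_R.mulVec x ≤ σ ^ 2}) := by
  intro σ _
  refine ⟨fun x hx i => ((hc i).dotProduct_mulVec_le_of_sub x).trans hx, ?_⟩
  rintro _ ⟨_, ⟨x, hx, rfl⟩, _, ⟨w, hw, rfl⟩, rfl⟩
  have hD : w ⬝ᵥ blockDiagonal' (fun i => aσ i • E_W i) *ᵥ w ≤ (∑ i, aσ i) * σ ^ 2 := by
    rw [dotProduct_blockDiagonal'_mulVec, Finset.sum_mul]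
    refine Finset.sum_le_sum fun i _ => ?_
    rw [smul_mulVec, dotProduct_smul, smul_eq_mul]
    exact mul_le_mul_of_nonneg_left (hw i) (haσ i)
  calc _ ≤ aα * (x ⬝ᵥ E_R *ᵥ x) + w ⬝ᵥ blockDiagonal' (fun i => aσ i • E_W i) *ᵥ w :=
        lyapunov_step_le_of_lmi _ _ _ _ _ ha x w
    _ ≤ (aα + ∑ i, aσ i) * σ ^ 2 := by
        rw [add_mul]
        exact add_le_add (mul_le_mul_of_nonneg_left hx haα) hD
    _ ≤ σ ^ 2 := mul_le_of_le_one_left (sq_nonneg σ) hb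

/-- the minimal-RPI LMI conditions (a)–(c) imply that `R(σ)` is a
robust positive invariant level set for the closed loop `Ā = A − Bᵘ K`. -/
theorem stmt7 {nx nu s : ℕ} {np nq : Fin s → ℕ}
    (A : Matrix (Fin nx) (Fin nx) ℝ) (Bu : Matrix (Fin nx) (Fin nu) ℝ)
    (Bw : Matrix (Fin nx) (Σ i, Fin (np i)) ℝ)
    (K : Matrix (Fin nu) (Fin nx) ℝ)
    (E_R : Matrix (Fin nx) (Fin nx) ℝ) (hER : E_R.PosDef)
    (E_W : ∀ i, Matrix (Fin (np i)) (Fin (np i)) ℝ) (hEW : ∀ i, (E_W i).PosDef)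
    (Cb : ∀ i : Fin s, Matrix (Fin (nq i)) (Fin nx) ℝ)
    (aα : ℝ) (aσ : Fin s → ℝ) (haα : 0 ≤ aα) (haσ : ∀ i, 0 ≤ aσ i)
    (ha : (-(Matrix.fromBlocks
        (Matrix.fromBlocks (-E_R) (E_R * (A - Bu * K)) ((A - Bu * K)ᵀ * E_R) (-(aα • E_R)))
        (Matrix.fromRows (E_R * Bw) 0)
        (Matrix.fromCols (Bwᵀ * E_R) 0)
        (-(Matrix.blockDiagonal' fun i => aσ i • E_W i)))).PosSemidef)
    (hb : aα + ∑ i, aσ i ≤ 1)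
    (hc : ∀ i, (E_R - (Cb i)ᵀ * Cb i).PosSemidef) :
    ∀ σ : ℝ, 0 ≤ σ →
      ({x | x ⬝ᵥ E_R.mulVec x ≤ σ ^ 2} ⊆
          {x | ∀ i, x ⬝ᵥ ((Cb i)ᵀ * Cb i).mulVec x ≤ σ ^ 2}) ∧
      ((A - Bu * K).mulVec '' {x | x ⬝ᵥ E_R.mulVec x ≤ σ ^ 2} +
          Bw.mulVec ''
            {w | ∀ i, vecBlock w i ⬝ᵥ (E_W i).mulVec (vecBlock w i) ≤ σ ^ 2} ⊆
        {x | x ⬝ᵥ E_R.mulVec x ≤ σ ^ 2}) :=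
  stmt7_general A Bu Bw K E_R E_W Cb aα aσ haα haσ ha hb hc
end

section
/- Let K, K_R ∈ ℝ^{n_u×n_x}, let E_R ∈ ℝ^{n_x×n_x} be symmetric positive definite, and set H̄ = H_x − H_u K and H̄_R = H_x − H_u K_R, with i-th rows H̄_i, (H̄_R)_i and (H_u)_i. Let z ∈ ℝ^{n_x}, ν ∈ ℝ^{n_u}, α ≥ 0 satisfy, for every i ∈ {1,…,n_c}, H̄_i z + (H_u)_i ν + ‖(H̄_R)_i E_R^{-1/2}‖₂ · α ≤ g_i. Then for every e ∈ ℝ^{n_x} with eᵀ E_R e ≤ α², the state x = z + e and control u = −K z + ν − K_R e satisfy H_x x + H_u u ≤ g componentwise, i.e., (x,u) ∈ ℂ. -/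
/-! The input correction `-K_R e` makes the constraint residual split as
`H̄ z + H_u ν + H̄_R e`. Writing `(H̄_R)_i e = ((H̄_R)_i S⁻¹) ⬝ (S e)` and using
`‖S e‖² = eᵀ E_R e ≤ α²`, Cauchy–Schwarz bounds the error term by `‖(H̄_R)_i S⁻¹‖ α`,
which is exactly the tightening in the hypothesis. -/

open Matrix Set Pointwise Filter Topology

section RobustConstraint

variable {m n : Type*} [Fintype n]

theorem vnorm_eq_norm_toLp (v : n → ℝ) : vnorm v = ‖WithLp.toLp 2 v‖ := by
  simp [vnorm, EuclideanSpace.norm_eq]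

theorem vnorm_nonneg (v : n → ℝ) : 0 ≤ vnorm v := Real.sqrt_nonneg _

theorem dotProduct_le_vnorm_mul_vnorm (v w : n → ℝ) : v ⬝ᵥ w ≤ vnorm v * vnorm w := by
  simpa [vnorm_eq_norm_toLp, EuclideanSpace.inner_eq_star_dotProduct, dotProduct_comm v w]
    using real_inner_le_norm (WithLp.toLp 2 v : EuclideanSpace ℝ n) (WithLp.toLp 2 w)

theorem vnorm_sq (v : n → ℝ) : vnorm v ^ 2 = v ⬝ᵥ v := by
  rw [vnorm, Real.sq_sqrt (by positivity)]
  simp [dotProduct, sq]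

theorem vnorm_mulVec_sq_of_isSymm {S : Matrix n n ℝ} (hS : S.IsSymm) (e : n → ℝ) :
    vnorm (S *ᵥ e) ^ 2 = e ⬝ᵥ (S * S) *ᵥ e := by
  rw [vnorm_sq, ← mulVec_mulVec, dotProduct_mulVec e, ← mulVec_transpose, hS.eq]

theorem vnorm_mulVec_le_of_dotProduct_mulVec_le {S : Matrix n n ℝ} (hS : S.IsSymm)
    {e : n → ℝ} {α : ℝ} (hα : 0 ≤ α) (he : e ⬝ᵥ (S * S) *ᵥ e ≤ α ^ 2) :
    vnorm (S *ᵥ e) ≤ α := by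
  rw [← vnorm_mulVec_sq_of_isSymm hS] at he
  exact abs_le_of_sq_le_sq' he hα |>.2

theorem mulVec_apply_le_vnorm_mul_inv_mul [DecidableEq n] (M : Matrix m n ℝ)
    {S : Matrix n n ℝ} (hS : IsUnit S) (e : n → ℝ) (i : m) :
    (M *ᵥ e) i ≤ vnorm ((M * S⁻¹) i) * vnorm (S *ᵥ e) := by
  have hcancel : (M * S⁻¹) *ᵥ (S *ᵥ e) = M *ᵥ e := by
    rw [mulVec_mulVec, Matrix.mul_assoc, nonsing_inv_mul _ ((isUnit_iff_isUnit_det S).mp hS),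
      Matrix.mul_one]
  calc (M *ᵥ e) i = ((M * S⁻¹) *ᵥ (S *ᵥ e)) i := by rw [hcancel]
    _ = (M * S⁻¹) i ⬝ᵥ (S *ᵥ e) := rfl
    _ ≤ vnorm ((M * S⁻¹) i) * vnorm (S *ᵥ e) := dotProduct_le_vnorm_mul_vnorm _ _

theorem mulVec_feedback_eq {nu : Type*} [Fintype nu] (Hx : Matrix m n ℝ) (Hu : Matrix m nu ℝ)
    (K K_R : Matrix nu n ℝ) (z e : n → ℝ) (ν : nu → ℝ) :
    Hx *ᵥ (z + e) + Hu *ᵥ (-(K *ᵥ z) + ν - K_R *ᵥ e) =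
      (Hx - Hu * K) *ᵥ z + Hu *ᵥ ν + (Hx - Hu * K_R) *ᵥ e := by
  simp only [mulVec_add, mulVec_sub, sub_mulVec, mulVec_neg, ← mulVec_mulVec]
  abel

end RobustConstraint

theorem stmt14_general {nx nu nc : ℕ}
    (Hx : Matrix (Fin nc) (Fin nx) ℝ) (Hu : Matrix (Fin nc) (Fin nu) ℝ) (g : Fin nc → ℝ)
    (K K_R : Matrix (Fin nu) (Fin nx) ℝ)
    (E_R : Matrix (Fin nx) (Fin nx) ℝ)
    (S : Matrix (Fin nx) (Fin nx) ℝ) (hS : S.PosDef) (hSS : S * S = E_R)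
    (z : Fin nx → ℝ) (ν : Fin nu → ℝ) (α : ℝ) (hα : 0 ≤ α)
    (hcon : ∀ i, ((Hx - Hu * K).mulVec z) i + (Hu.mulVec ν) i +
        vnorm (((Hx - Hu * K_R) * S⁻¹) i) * α ≤ g i) :
    ∀ e : Fin nx → ℝ, e ⬝ᵥ E_R.mulVec e ≤ α ^ 2 →
      ∀ i, (Hx.mulVec (z + e)) i +
          (Hu.mulVec (-(K.mulVec z) + ν - K_R.mulVec e)) i ≤ g i := by
  intro e he i
  have hSe : vnorm (S *ᵥ e) ≤ α :=
    vnorm_mulVec_le_of_dotProduct_mulVec_le hS.isHermitian hα (hSS ▸ he)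
  have hrow := mulVec_apply_le_vnorm_mul_inv_mul (Hx - Hu * K_R) hS.isUnit e i
  have hdecomp := congrFun (mulVec_feedback_eq Hx Hu K K_R z e ν) i
  simp only [Pi.add_apply] at hdecomp
  rw [hdecomp]
  linarith [hcon i, mul_le_mul_of_nonneg_left hSe (vnorm_nonneg (((Hx - Hu * K_R) * S⁻¹) i))]

/-- robustified linear constraints: if the tightened constraints hold for
`(z, ν, α)`, then the true state/input pair `x = z + e`, `u = −Kz + ν − K_R e`
satisfies `H_x x + H_u u ≤ g` for every `e` in the ellipsoid. `S` is the symmetric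
positive definite square root of `E_R`. -/
theorem stmt14 {nx nu nc : ℕ}
    (Hx : Matrix (Fin nc) (Fin nx) ℝ) (Hu : Matrix (Fin nc) (Fin nu) ℝ) (g : Fin nc → ℝ)
    (K K_R : Matrix (Fin nu) (Fin nx) ℝ)
    (E_R : Matrix (Fin nx) (Fin nx) ℝ) (hER : E_R.PosDef)
    (S : Matrix (Fin nx) (Fin nx) ℝ) (hS : S.PosDef) (hSS : S * S = E_R)
    (z : Fin nx → ℝ) (ν : Fin nu → ℝ) (α : ℝ) (hα : 0 ≤ α)
    (hcon : ∀ i, ((Hx - Hu * K).mulVec z) i + (Hu.mulVec ν) i +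
        vnorm (((Hx - Hu * K_R) * S⁻¹) i) * α ≤ g i) :
    ∀ e : Fin nx → ℝ, e ⬝ᵥ E_R.mulVec e ≤ α ^ 2 →
      ∀ i, (Hx.mulVec (z + e)) i +
          (Hu.mulVec (-(K.mulVec z) + ν - K_R.mulVec e)) i ≤ g i :=
  stmt14_general Hx Hu g K K_R E_R S hS hSS z ν α hα hcon
end
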